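/- Let Γ₁ ⊆ ℝⁿ and Γ₂ ⊆ ℝᵐ be compact sets equipped with the restriction of Lebesgue measure, let Γ = Γ₁ × Γ₂, and let H = L²(Γ₁) × L²(Γ). Define J: H → H by J(e₁, e₂) = (−A e₂, B e₁), where A is the partial-integration operator and B the extension operator. Then the graph D = {(e, J e) : e ∈ H} ⊆ H × H is a Dirac structure: D = D^⊥, where D^⊥ = {a ∈ H × H : ⟪a, b⟫ = 0 for all b ∈ D} is the orthogonal companion with respect to the pairing ⟪(e, f), (e', f')⟫ = ⟨e, f'⟩_H + ⟨e', f⟩_H. -/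

import Mathlib

/-!
Partial integration `A` and extension `B` are adjoint by Fubini. For such a pair, pairing any
`a = ((e₁, e₂), (f₁, f₂))` with a graph element `((x, y), (-A y, B x))` gives
`⟨x, f₁ + A e₂⟩ + ⟨y, f₂ - B e₁⟩`. This vanishes when `a` lies in the graph; conversely, if it
vanishes for all `(x, y)`, taking `(f₁ + A e₂, 0)` and `(0, f₂ - B e₁)` puts `a` in the graph.
-/

open MeasureTheory RealInnerProductSpace

/-- The symmetric pairing `⟪(e, f), (e', f')⟫ = ⟨e, f'⟩_H + ⟨e', f⟩_H` on `H × H`, where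
`H = H₁ × H₂` carries the product inner product
`⟨(a₁,a₂),(b₁,b₂)⟩_H = ⟨a₁,b₁⟩ + ⟨a₂,b₂⟩`. -/
noncomputable def bondPairing {H₁ H₂ : Type*}
    [NormedAddCommGroup H₁] [InnerProductSpace ℝ H₁]
    [NormedAddCommGroup H₂] [InnerProductSpace ℝ H₂]
    (a b : (H₁ × H₂) × (H₁ × H₂)) : ℝ :=
  (⟪a.1.1, b.2.1⟫ + ⟪a.1.2, b.2.2⟫) + (⟪b.1.1, a.2.1⟫ + ⟪b.1.2, a.2.2⟫)

section Adjoint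

variable {α β : Type*} [MeasurableSpace α] [MeasurableSpace β]
  {μ : Measure α} {ν : Measure β}

theorem L2.inner_eq_integral_mul (f g : Lp ℝ 2 μ) : ⟪f, g⟫ = ∫ x, f x * g x ∂μ := by
  simp only [L2.inner_def, RCLike.inner_apply, conj_trivial, mul_comm]

variable [SFinite μ] [SFinite ν]

theorem inner_partialIntegral_eq_inner_extension
    {A : Lp ℝ 2 (μ.prod ν) → Lp ℝ 2 μ} {B : Lp ℝ 2 μ → Lp ℝ 2 (μ.prod ν)}
    (hA : ∀ u, (A u : α → ℝ) =ᵐ[μ] fun x => ∫ y, u (x, y) ∂ν)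
    (hB : ∀ v, (B v : α × β → ℝ) =ᵐ[μ.prod ν] fun p => v p.1)
    (u : Lp ℝ 2 (μ.prod ν)) (v : Lp ℝ 2 μ) :
    ⟪A u, v⟫ = ⟪u, B v⟫ := by
  have hBv : (fun p => u p * B v p) =ᵐ[μ.prod ν] fun p => u p * v p.1 := by
    filter_upwards [hB v] with p hp using by rw [hp]
  have hint : Integrable (fun p : α × β => u p * v p.1) (μ.prod ν) := by
    refine Integrable.congr ?_ hBv
    simpa only [RCLike.inner_apply, conj_trivial, mul_comm] using
      L2.integrable_inner (𝕜 := ℝ) u (B v)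
  calc ⟪A u, v⟫ = ∫ x, (∫ y, u (x, y) ∂ν) * v x ∂μ := by
        rw [L2.inner_eq_integral_mul]
        refine integral_congr_ae ?_
        filter_upwards [hA u] with x hx using by rw [hx]
    _ = ∫ p, u p * v p.1 ∂(μ.prod ν) := by
        rw [integral_prod _ hint]
        simp only [integral_mul_const]
    _ = ⟪u, B v⟫ := by
        rw [L2.inner_eq_integral_mul, integral_congr_ae hBv]

end Adjoint

section CouplingGraph

variable {H₁ H₂ : Type*} [NormedAddCommGroup H₁] [InnerProductSpace ℝ H₁]
  [NormedAddCommGroup H₂] [InnerProductSpace ℝ H₂]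
  {A : H₂ → H₁} {B : H₁ → H₂}

def couplingGraph (A : H₂ → H₁) (B : H₁ → H₂) : Set ((H₁ × H₂) × (H₁ × H₂)) :=
  {p | p.2 = (-(A p.1.2), B p.1.1)}

theorem bondPairing_graph_eq (hAB : ∀ u v, ⟪A u, v⟫ = ⟪u, B v⟫)
    (a : (H₁ × H₂) × (H₁ × H₂)) (x : H₁) (y : H₂) :
    bondPairing a ((x, y), (-(A y), B x)) =
      ⟪x, a.2.1 + A a.1.2⟫ + ⟪y, a.2.2 - B a.1.1⟫ := by
  simp only [bondPairing, inner_neg_right, inner_add_right, inner_sub_right,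
    ← hAB, real_inner_comm a.1.1, real_inner_comm (A a.1.2)]
  ring

theorem couplingGraph_eq_orthogonalCompanion (hAB : ∀ u v, ⟪A u, v⟫ = ⟪u, B v⟫) :
    couplingGraph A B = {a | ∀ b ∈ couplingGraph A B, bondPairing a b = 0} := by
  ext ⟨⟨e₁, e₂⟩, f₁, f₂⟩
  simp only [couplingGraph, Set.mem_ofPred_eq, Prod.mk.injEq]
  constructor
  · rintro ⟨rfl, rfl⟩ ⟨⟨x, y⟩, f⟩ (rfl : f = (-(A y), B x))
    simp only [bondPairing_graph_eq hAB, neg_add_cancel, sub_self, inner_zero_right, add_zero]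
  · intro ha
    have h₁ := ha ((f₁ + A e₂, 0), (-(A 0), B (f₁ + A e₂))) rfl
    have h₂ := ha ((0, f₂ - B e₁), (-(A (f₂ - B e₁)), B 0)) rfl
    simp only [bondPairing_graph_eq hAB, inner_zero_left, add_zero, zero_add,
      inner_self_eq_zero] at h₁ h₂
    exact ⟨eq_neg_of_add_eq_zero_left h₁, sub_eq_zero.mp h₂⟩

end CouplingGraph

theorem coupling_graph_is_dirac_structure_general
    (n m : ℕ) (Γ₁ : Set (EuclideanSpace ℝ (Fin n))) (Γ₂ : Set (EuclideanSpace ℝ (Fin m)))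
    (A : Lp ℝ 2 ((volume.restrict Γ₁).prod (volume.restrict Γ₂)) →L[ℝ]
        Lp ℝ 2 (volume.restrict Γ₁))
    (B : Lp ℝ 2 (volume.restrict Γ₁) →L[ℝ]
        Lp ℝ 2 ((volume.restrict Γ₁).prod (volume.restrict Γ₂)))
    (hA : ∀ u, (A u : _ → ℝ) =ᵐ[volume.restrict Γ₁]
        fun x₁ => ∫ x₂, u (x₁, x₂) ∂(volume.restrict Γ₂))
    (hB : ∀ v, (B v : _ → ℝ) =ᵐ[(volume.restrict Γ₁).prod (volume.restrict Γ₂)]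
        fun p : EuclideanSpace ℝ (Fin n) × EuclideanSpace ℝ (Fin m) => v p.1)
    (D : Set ((Lp ℝ 2 (volume.restrict Γ₁) ×
          Lp ℝ 2 ((volume.restrict Γ₁).prod (volume.restrict Γ₂))) ×
        (Lp ℝ 2 (volume.restrict Γ₁) ×
          Lp ℝ 2 ((volume.restrict Γ₁).prod (volume.restrict Γ₂)))))
    (hD : D = {p | p.2 = (-(A p.1.2), B p.1.1)}) :
    D = {a | ∀ b ∈ D, bondPairing a b = 0} := by
  subst hD
  exact couplingGraph_eq_orthogonalCompanion (inner_partialIntegral_eq_inner_extension hA hB)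

/-- **paper's main Theorem.** On `H = L²(Γ₁) × L²(Γ)` with
`J(e₁,e₂) = (−Ae₂, Be₁)` (partial-integration `A`, extension `B`), the graph
`D = {(e, Je) : e ∈ H}` equals its orthogonal companion
`D^⊥ = {a : ⟪a, b⟫ = 0 ∀ b ∈ D}` for `⟪(e,f),(e',f')⟫ = ⟨e,f'⟩_H + ⟨e',f⟩_H`;
i.e. `D` is a Dirac structure. -/
theorem coupling_graph_is_dirac_structure
    (n m : ℕ) (Γ₁ : Set (EuclideanSpace ℝ (Fin n))) (Γ₂ : Set (EuclideanSpace ℝ (Fin m)))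
    (hΓ₁ : IsCompact Γ₁) (hΓ₂ : IsCompact Γ₂)
    (A : Lp ℝ 2 ((volume.restrict Γ₁).prod (volume.restrict Γ₂)) →L[ℝ]
        Lp ℝ 2 (volume.restrict Γ₁))
    (B : Lp ℝ 2 (volume.restrict Γ₁) →L[ℝ]
        Lp ℝ 2 ((volume.restrict Γ₁).prod (volume.restrict Γ₂)))
    (hA : ∀ u, (A u : _ → ℝ) =ᵐ[volume.restrict Γ₁]
        fun x₁ => ∫ x₂, u (x₁, x₂) ∂(volume.restrict Γ₂))
    (hB : ∀ v, (B v : _ → ℝ) =ᵐ[(volume.restrict Γ₁).prod (volume.restrict Γ₂)]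
        fun p : EuclideanSpace ℝ (Fin n) × EuclideanSpace ℝ (Fin m) => v p.1)
    (D : Set ((Lp ℝ 2 (volume.restrict Γ₁) ×
          Lp ℝ 2 ((volume.restrict Γ₁).prod (volume.restrict Γ₂))) ×
        (Lp ℝ 2 (volume.restrict Γ₁) ×
          Lp ℝ 2 ((volume.restrict Γ₁).prod (volume.restrict Γ₂)))))
    (hD : D = {p | p.2 = (-(A p.1.2), B p.1.1)}) :
    D = {a | ∀ b ∈ D, bondPairing a b = 0} :=
  coupling_graph_is_dirac_structure_general n m Γ₁ Γ₂ A B hA hB D hD
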